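/- Let q > 3 and α ∈ (0, α*(q)). Define g(t) = ψ(t)²/t^{q-3} on [x₀(α), x₁(α)], where ψ(t) = f'(t)² - 2 f(t) f''(t) and f(t) = t² - 1 - α t^q. Then g' changes sign exactly twice on [x₀(α), x₁(α)]: there exist points x₀(α) < a < b < x₁(α) such that g' < 0 on (x₀(α), a), g' > 0 on (a, b), and g' < 0 on (b, x₁(α)). -/

import Mathlib

/-!
Writing `g = ψ² / t^(q-3)`, one finds `g' = ψ · HQ / t^(q-2)` with
`HQ = 4αq(q-1)(q-2) t^(q-2) f - (q-3) ψ`. Since `ψ' = -2 f f''' > 0` wherever `f > 0` and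
`ψ(x₀) = f'(x₀)² > 0`, the sign of `g'` on `(x₀, x₁)` is the sign of `HQ`. In turn
`HQ' = -2 f''' φ` with `φ = (q+3)t² - (q-1) - α(3q-1)t^q`, which has the same shape as `f`:
any `A t² - B - C t^q` with positive coefficients and some positive value is negative, positive,
negative on `(0, ∞)`. So `HQ` decreases, increases, decreases; as `HQ(x₀) = -(q-3)ψ(x₀) < 0`,
`HQ(x₁) < 0` and `HQ(m) = 4(q+1)(q-2) f(m) > 0` at the maximum `m` of `f`, it changes sign
exactly twice in `(x₀, x₁)`.
-/

open Set Filter MeasureTheory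

noncomputable def fQ (q α t : ℝ) : ℝ := t ^ 2 - 1 - α * t ^ q

noncomputable def alphaStar (q : ℝ) : ℝ := 2 / (q - 2) * ((q - 2) / q) ^ (q / 2)

noncomputable def x0 (q α : ℝ) : ℝ := sInf {t : ℝ | 0 < t ∧ fQ q α t = 0}

noncomputable def x1 (q α : ℝ) : ℝ := sSup {t : ℝ | 0 < t ∧ fQ q α t = 0}

noncomputable def Iq (q α : ℝ) : ℝ := ∫ t in x0 q α..x1 q α, 1 / Real.sqrt (fQ q α t)

noncomputable def fQd1 (q α t : ℝ) : ℝ := 2 * t - α * q * t ^ (q - 1)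

noncomputable def fQd2 (q α t : ℝ) : ℝ := 2 - α * q * (q - 1) * t ^ (q - 2)

noncomputable def fQd3 (q α t : ℝ) : ℝ := -(α * q * (q - 1) * (q - 2) * t ^ (q - 3))

noncomputable def psiQ (q α t : ℝ) : ℝ := fQd1 q α t ^ 2 - 2 * fQ q α t * fQd2 q α t

theorem exists_zeros_of_strictMonoOn_Icc_of_strictAntiOn_Ici {H : ℝ → ℝ} {u s v : ℝ}
    (hus : u ≤ s) (hsv : s ≤ v) (hcont : ContinuousOn H (Icc u v))
    (hmono : StrictMonoOn H (Icc u s)) (hanti : StrictAntiOn H (Ici s))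
    (hu : H u < 0) (hs : 0 < H s) (hv : H v < 0) :
    ∃ a b, u < a ∧ a < s ∧ s < b ∧ b < v ∧ H a = 0 ∧ H b = 0 ∧
      (∀ t ∈ Ico u a, H t < 0) ∧ (∀ t ∈ Ioo a b, 0 < H t) ∧ (∀ t, b < t → H t < 0) := by
  obtain ⟨a, ⟨hua, has⟩, ha⟩ :=
    intermediate_value_Ioo hus (hcont.mono (Icc_subset_Icc_right hsv)) ⟨hu, hs⟩
  obtain ⟨b, ⟨hsb, hbv⟩, hb⟩ :=
    intermediate_value_Ioo' hsv (hcont.mono (Icc_subset_Icc_left hus)) ⟨hv, hs⟩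
  refine ⟨a, b, hua, has, hsb, hbv, ha, hb, fun t ht => ?_, fun t ht => ?_, fun t ht => ?_⟩
  · rw [← ha]
    exact hmono ⟨ht.1, (ht.2.trans has).le⟩ ⟨hua.le, has.le⟩ ht.2
  · rcases le_or_gt t s with hts | hst
    · rw [← ha]
      exact hmono ⟨hua.le, has.le⟩ ⟨hua.le.trans ht.1.le, hts⟩ ht.1
    · rw [← hb]
      exact hanti (mem_Ici.2 hst.le) (mem_Ici.2 hsb.le) ht.2
  · rw [← hb]
    exact hanti (mem_Ici.2 hsb.le) (mem_Ici.2 (hsb.trans ht).le) ht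

structure IsNegPosNeg (F : ℝ → ℝ) (r₀ r₁ : ℝ) : Prop where
  pos : 0 < r₀
  lt : r₀ < r₁
  apply_left : F r₀ = 0
  apply_right : F r₁ = 0
  neg_left : ∀ t ∈ Ioo 0 r₀, F t < 0
  pos_mid : ∀ t ∈ Ioo r₀ r₁, 0 < F t
  neg_right : ∀ t, r₁ < t → F t < 0

namespace IsNegPosNeg

variable {F H : ℝ → ℝ} {r₀ r₁ : ℝ}

theorem setOf_eq (h : IsNegPosNeg F r₀ r₁) : {t | 0 < t ∧ F t = 0} = {r₀, r₁} := by
  ext t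
  constructor
  · rintro ⟨ht, hFt⟩
    rcases lt_trichotomy t r₀ with h₀ | rfl | h₀
    · exact absurd hFt (h.neg_left t ⟨ht, h₀⟩).ne
    · exact Or.inl rfl
    rcases lt_trichotomy t r₁ with h₁ | rfl | h₁
    · exact absurd hFt (h.pos_mid t ⟨h₀, h₁⟩).ne'
    · exact Or.inr rfl
    · exact absurd hFt (h.neg_right t h₁).ne
  · rintro (rfl | rfl)
    exacts [⟨h.pos, h.apply_left⟩, ⟨h.pos.trans h.lt, h.apply_right⟩]

theorem mul_of_pos {k : ℝ → ℝ} (h : IsNegPosNeg F r₀ r₁) (hk : ∀ t, 0 < t → 0 < k t) :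
    IsNegPosNeg (fun t => k t * F t) r₀ r₁ where
  pos := h.pos
  lt := h.lt
  apply_left := by simp only [h.apply_left, mul_zero]
  apply_right := by simp only [h.apply_right, mul_zero]
  neg_left t ht := mul_neg_of_pos_of_neg (hk t ht.1) (h.neg_left t ht)
  pos_mid t ht := _root_.mul_pos (hk t (h.pos.trans ht.1)) (h.pos_mid t ht)
  neg_right t ht := mul_neg_of_pos_of_neg (hk t (h.pos.trans (h.lt.trans ht))) (h.neg_right t ht)

variable {H' : ℝ → ℝ}

theorem strictAntiOn_left (hH : ∀ t, 0 < t → HasDerivAt H (H' t) t)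
    (h : IsNegPosNeg H' r₀ r₁) : StrictAntiOn H (Ioc 0 r₀) := by
  refine strictAntiOn_of_hasDerivWithinAt_neg (convex_Ioc 0 r₀)
    (fun t ht => (hH t ht.1).continuousAt.continuousWithinAt)
    (fun t ht => (hH t (interior_subset ht).1).hasDerivWithinAt) (fun t ht => ?_)
  rw [interior_Ioc] at ht
  exact h.neg_left t ht

theorem strictMonoOn_mid (hH : ∀ t, 0 < t → HasDerivAt H (H' t) t)
    (h : IsNegPosNeg H' r₀ r₁) : StrictMonoOn H (Icc r₀ r₁) := by
  refine strictMonoOn_of_hasDerivWithinAt_pos (convex_Icc r₀ r₁)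
    (fun t ht => (hH t (h.pos.trans_le ht.1)).continuousAt.continuousWithinAt)
    (fun t ht => (hH t (h.pos.trans_le (interior_subset ht).1)).hasDerivWithinAt)
    (fun t ht => ?_)
  rw [interior_Icc] at ht
  exact h.pos_mid t ht

theorem strictAntiOn_right (hH : ∀ t, 0 < t → HasDerivAt H (H' t) t)
    (h : IsNegPosNeg H' r₀ r₁) : StrictAntiOn H (Ici r₁) := by
  have hr₁ : 0 < r₁ := h.pos.trans h.lt
  refine strictAntiOn_of_hasDerivWithinAt_neg (convex_Ici r₁)
    (fun t ht => (hH t (hr₁.trans_le ht)).continuousAt.continuousWithinAt)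
    (fun t ht => (hH t (hr₁.trans_le (interior_subset ht))).hasDerivWithinAt)
    (fun t ht => ?_)
  rw [interior_Ici] at ht
  exact h.neg_right t ht

end IsNegPosNeg

theorem exists_signs_of_hasDerivAt_isNegPosNeg {H H' : ℝ → ℝ} {p r u m v : ℝ}
    (hH : ∀ t, 0 < t → HasDerivAt H (H' t) t) (hH' : IsNegPosNeg H' p r)
    (hu0 : 0 < u) (hum : u < m) (hmv : m < v) (hu : H u < 0) (hm : 0 < H m) (hv : H v < 0) :
    ∃ a b, u < a ∧ a < b ∧ b < v ∧ (∀ t ∈ Ioo u a, H t < 0) ∧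
      (∀ t ∈ Ioo a b, 0 < H t) ∧ (∀ t ∈ Ioo b v, H t < 0) := by
  have h₁ := hH'.strictAntiOn_left hH
  have h₂ := hH'.strictMonoOn_mid hH
  have h₃ := hH'.strictAntiOn_right hH
  have hpm : p < m := by
    by_contra! hmp
    linarith [h₁ ⟨hu0, hum.le.trans hmp⟩ ⟨hu0.trans hum, hmp⟩ hum]
  have hmr : H m ≤ H r := by
    rcases le_or_gt m r with hmr | hrm
    · exact h₂.monotoneOn ⟨hpm.le, hmr⟩ ⟨hH'.lt.le, le_rfl⟩ hmr
    · exact h₃.antitoneOn (mem_Ici.2 le_rfl) (mem_Ici.2 hrm.le) hrm.le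
  have hur : u < r := by
    by_contra! hru
    linarith [h₃ (mem_Ici.2 hru) (mem_Ici.2 (hru.trans hum.le)) hum]
  have hrv : r ≤ v := by
    by_contra! hvr
    linarith [h₂ ⟨hpm.le, (hmv.trans hvr).le⟩ ⟨(hpm.trans hmv).le, hvr.le⟩ hmv]
  -- `H` may still be decreasing on `(u, p]`, so the increasing stretch starts at `max u p`
  have hneg_start : ∀ t, u ≤ t → t ≤ p → H t < 0 := fun t hut htp =>
    (h₁.antitoneOn ⟨hu0, hut.trans htp⟩ ⟨hu0.trans_le hut, htp⟩ hut).trans_lt hu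
  have hHu' : H (max u p) < 0 := by
    rcases le_total p u with hpu | hup
    · rwa [max_eq_left hpu]
    · rw [max_eq_right hup]
      exact hneg_start p hup le_rfl
  obtain ⟨a, b, hua, har, hrb, hbv, -, -, hneg₀, hpos, hneg₁⟩ :=
    exists_zeros_of_strictMonoOn_Icc_of_strictAntiOn_Ici (max_le hur.le hH'.lt.le) hrv
      (fun t ht =>
        (hH t (hu0.trans_le ((le_max_left u p).trans ht.1))).continuousAt.continuousWithinAt)
      (h₂.mono (Icc_subset_Icc_left (le_max_right u p))) h₃ hHu' (hm.trans_le hmr) hv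
  refine ⟨a, b, (le_max_left u p).trans_lt hua, har.trans hrb, hbv, fun t ht => ?_, hpos,
    fun t ht => hneg₁ t ht.1⟩
  rcases le_or_gt (max u p) t with hu't | htu'
  · exact hneg₀ t ⟨hu't, ht.2⟩
  · exact hneg_start t ht.1.le ((lt_max_iff.1 htu').resolve_left ht.1.not_gt).le

noncomputable def quadRpow (A B C q t : ℝ) : ℝ := A * t ^ 2 - B - C * t ^ q

/-- The critical point of `quadRpow A B C q` on `(0, ∞)`. -/
noncomputable def quadRpowCrit (A C q : ℝ) : ℝ := (2 * A / (C * q)) ^ (q - 2)⁻¹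

section QuadRpow

variable {A B C q t : ℝ}

theorem hasDerivAt_quadRpow (h : t ≠ 0 ∨ 1 ≤ q) :
    HasDerivAt (quadRpow A B C q) (2 * A * t - C * q * t ^ (q - 1)) t := by
  have h := (((hasDerivAt_pow 2 t).const_mul A).sub_const B).sub
    ((Real.hasDerivAt_rpow_const h).const_mul C)
  refine h.congr_deriv ?_
  push_cast
  ring

theorem continuous_quadRpow (hq : 0 ≤ q) : Continuous (quadRpow A B C q) :=
  ((continuous_const.mul (continuous_pow 2)).sub continuous_const).sub
    (continuous_const.mul (Real.continuous_rpow_const hq))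

theorem quadRpow_zero (hq : q ≠ 0) : quadRpow A B C q 0 = -B := by
  simp [quadRpow, Real.zero_rpow hq]

theorem quadRpowCrit_pos (hA : 0 < A) (hC : 0 < C) (hq : 0 < q) : 0 < quadRpowCrit A C q :=
  Real.rpow_pos_of_pos (by positivity) _

theorem quadRpowCrit_rpow (hA : 0 ≤ A) (hC : 0 ≤ C) (hq : 2 < q) :
    quadRpowCrit A C q ^ (q - 2) = 2 * A / (C * q) :=
  Real.rpow_inv_rpow (div_nonneg (by positivity) (mul_nonneg hC (by linarith))) (by linarith)

theorem quadRpow_deriv_eq (ht : 0 < t) :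
    2 * A * t - C * q * t ^ (q - 1) = t * (2 * A - C * q * t ^ (q - 2)) := by
  rw [show q - 1 = q - 2 + 1 by ring, Real.rpow_add_one ht.ne']
  ring

theorem quadRpow_deriv_pos (hA : 0 < A) (hC : 0 < C) (hq : 2 < q) (ht : 0 < t)
    (htm : t < quadRpowCrit A C q) :
    0 < 2 * A * t - C * q * t ^ (q - 1) := by
  have hpow : t ^ (q - 2) < 2 * A / (C * q) := by
    rw [← quadRpowCrit_rpow hA.le hC.le hq]
    exact Real.rpow_lt_rpow ht.le htm (by linarith)
  rw [lt_div_iff₀ (mul_pos hC (by linarith))] at hpow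
  rw [quadRpow_deriv_eq ht]
  exact mul_pos ht (by linarith)

theorem quadRpow_deriv_neg (hA : 0 < A) (hC : 0 < C) (hq : 2 < q)
    (htm : quadRpowCrit A C q < t) : 2 * A * t - C * q * t ^ (q - 1) < 0 := by
  have hm := quadRpowCrit_pos hA hC (by linarith : 0 < q)
  have ht : 0 < t := hm.trans htm
  have hpow : 2 * A / (C * q) < t ^ (q - 2) := by
    rw [← quadRpowCrit_rpow hA.le hC.le hq]
    exact Real.rpow_lt_rpow hm.le htm (by linarith)
  rw [div_lt_iff₀ (mul_pos hC (by linarith))] at hpow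
  rw [quadRpow_deriv_eq ht]
  exact mul_neg_of_pos_of_neg ht (by linarith)

theorem strictMonoOn_quadRpow (hA : 0 < A) (hC : 0 < C) (hq : 2 < q) :
    StrictMonoOn (quadRpow A B C q) (Icc 0 (quadRpowCrit A C q)) := by
  refine strictMonoOn_of_hasDerivWithinAt_pos (convex_Icc _ _)
    (continuous_quadRpow (by linarith)).continuousOn
    (fun t _ => (hasDerivAt_quadRpow (Or.inr (by linarith))).hasDerivWithinAt) (fun t ht => ?_)
  rw [interior_Icc] at ht
  exact quadRpow_deriv_pos hA hC hq ht.1 ht.2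

theorem strictAntiOn_quadRpow (hA : 0 < A) (hC : 0 < C) (hq : 2 < q) :
    StrictAntiOn (quadRpow A B C q) (Ici (quadRpowCrit A C q)) := by
  refine strictAntiOn_of_hasDerivWithinAt_neg (convex_Ici _)
    (continuous_quadRpow (by linarith)).continuousOn
    (fun t _ => (hasDerivAt_quadRpow (Or.inr (by linarith))).hasDerivWithinAt) (fun t ht => ?_)
  rw [interior_Ici] at ht
  exact quadRpow_deriv_neg hA hC hq ht

theorem quadRpow_le_quadRpowCrit (hA : 0 < A) (hC : 0 < C) (hq : 2 < q) (ht : 0 ≤ t) :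
    quadRpow A B C q t ≤ quadRpow A B C q (quadRpowCrit A C q) := by
  have hm := quadRpowCrit_pos hA hC (by linarith : 0 < q)
  rcases le_total t (quadRpowCrit A C q) with htm | hmt
  · exact (strictMonoOn_quadRpow hA hC hq).monotoneOn ⟨ht, htm⟩ ⟨hm.le, le_rfl⟩ htm
  · exact (strictAntiOn_quadRpow hA hC hq).antitoneOn (mem_Ici.2 le_rfl) (mem_Ici.2 hmt) hmt

theorem exists_gt_quadRpowCrit_quadRpow_eq (hA : 0 < A) (hC : 0 < C) (hq : 2 < q) :
    ∃ T, quadRpowCrit A C q < T ∧ quadRpow A B C q T = -B := by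
  have hq2 : q - 2 ≠ 0 := by linarith
  have hAC : 0 < A / C := div_pos hA hC
  set T := (A / C) ^ (q - 2)⁻¹
  have hT : 0 < T := Real.rpow_pos_of_pos hAC _
  have hTpow : T ^ (q - 2) = A / C := Real.rpow_inv_rpow hAC.le hq2
  refine ⟨T, ?_, ?_⟩
  · rw [← Real.rpow_lt_rpow_iff (quadRpowCrit_pos hA hC (by linarith)).le hT.le
      (by linarith : 0 < q - 2), quadRpowCrit_rpow hA.le hC.le hq, hTpow,
      div_lt_div_iff₀ (mul_pos hC (by linarith)) hC]
    nlinarith [mul_pos hA hC]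
  · have hTq : T ^ q = T ^ (q - 2) * T ^ 2 := by
      rw [← Real.rpow_natCast, ← Real.rpow_add hT]
      norm_num
    rw [quadRpow, hTq, hTpow]
    field_simp
    ring

theorem exists_isNegPosNeg_quadRpow (hA : 0 < A) (hB : 0 < B) (hC : 0 < C) (hq : 2 < q)
    (hw : ∃ w, 0 < w ∧ 0 < quadRpow A B C q w) :
    ∃ r₀ r₁, IsNegPosNeg (quadRpow A B C q) r₀ r₁ ∧
      r₀ < quadRpowCrit A C q ∧ quadRpowCrit A C q < r₁ := by
  obtain ⟨w, hw0, hw⟩ := hw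
  obtain ⟨T, hmT, hT⟩ := exists_gt_quadRpowCrit_quadRpow_eq (B := B) hA hC hq
  obtain ⟨r₀, r₁, hr₀, hr₀m, hmr₁, -, h₀, h₁, hneg₀, hpos, hneg₁⟩ :=
    exists_zeros_of_strictMonoOn_Icc_of_strictAntiOn_Ici
      (quadRpowCrit_pos hA hC (by linarith)).le hmT.le
      (continuous_quadRpow (by linarith)).continuousOn
      (strictMonoOn_quadRpow hA hC hq) (strictAntiOn_quadRpow hA hC hq)
      (by rw [quadRpow_zero (by linarith)]; linarith)
      (hw.trans_le (quadRpow_le_quadRpowCrit hA hC hq hw0.le)) (by rw [hT]; linarith)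
  exact ⟨r₀, r₁, ⟨hr₀, hr₀m.trans hmr₁, h₀, h₁, fun t ht => hneg₀ t ⟨ht.1.le, ht.2⟩, hpos, hneg₁⟩,
    hr₀m, hmr₁⟩

end QuadRpow

noncomputable def HQ (q α t : ℝ) : ℝ :=
  4 * α * q * (q - 1) * (q - 2) * t ^ (q - 2) * fQ q α t - (q - 3) * psiQ q α t

noncomputable def phiQ (q α : ℝ) : ℝ → ℝ := quadRpow (q + 3) (q - 1) (α * (3 * q - 1)) q

section Concrete

variable {q α t : ℝ}

theorem fQ_eq_quadRpow : fQ q α = quadRpow 1 1 α q := by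
  funext t
  simp only [fQ, quadRpow, one_mul]

theorem fQ_sqrt_pos_of_lt_alphaStar (hq : 2 < q) (hα : α < alphaStar q) :
    0 < fQ q α √(q / (q - 2)) := by
  have hq0 : q ≠ 0 := by linarith
  have hq2 : q - 2 ≠ 0 := by linarith
  have hx : 0 < q / (q - 2) := div_pos (by linarith) (by linarith)
  have hpow : √(q / (q - 2)) ^ q = (q / (q - 2)) ^ (q / 2) := by
    rw [Real.sqrt_eq_rpow, ← Real.rpow_mul hx.le]
    ring_nf
  have hstar : alphaStar q * (q / (q - 2)) ^ (q / 2) = 2 / (q - 2) := by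
    rw [alphaStar, mul_assoc, ← Real.mul_rpow (div_nonneg (by linarith) (by linarith)) hx.le,
      show (q - 2) / q * (q / (q - 2)) = 1 by field_simp, Real.one_rpow, mul_one]
  have hlt := mul_lt_mul_of_pos_right hα (Real.rpow_pos_of_pos hx (q / 2))
  have hx1 : q / (q - 2) - 1 = 2 / (q - 2) := by field_simp; ring
  rw [fQ, Real.sq_sqrt hx.le, hpow]
  linarith

theorem exists_isNegPosNeg_fQ (hq : 2 < q) (hα₀ : 0 < α) (hα : α < alphaStar q) :
    ∃ r₀ r₁, IsNegPosNeg (fQ q α) r₀ r₁ ∧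
      r₀ < quadRpowCrit 1 α q ∧ quadRpowCrit 1 α q < r₁ := by
  rw [fQ_eq_quadRpow]
  exact exists_isNegPosNeg_quadRpow one_pos one_pos hα₀ hq
    ⟨_, Real.sqrt_pos.2 (div_pos (by linarith) (by linarith)),
      fQ_eq_quadRpow ▸ fQ_sqrt_pos_of_lt_alphaStar hq hα⟩

theorem x0_eq_of_isNegPosNeg {r₀ r₁ : ℝ} (hf : IsNegPosNeg (fQ q α) r₀ r₁) : x0 q α = r₀ := by
  rw [x0, hf.setOf_eq, csInf_pair, inf_of_le_left hf.lt.le]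

theorem x1_eq_of_isNegPosNeg {r₀ r₁ : ℝ} (hf : IsNegPosNeg (fQ q α) r₀ r₁) : x1 q α = r₁ := by
  rw [x1, hf.setOf_eq, csSup_pair, sup_of_le_right hf.lt.le]

theorem fQd1_pos (hq : 2 < q) (hα : 0 < α) (ht : 0 < t) (htm : t < quadRpowCrit 1 α q) :
    0 < fQd1 q α t := by
  have := quadRpow_deriv_pos one_pos hα hq ht htm
  rw [fQd1]
  linarith

theorem hasDerivAt_fQ (ht : t ≠ 0) : HasDerivAt (fQ q α) (fQd1 q α t) t := by
  rw [fQ_eq_quadRpow, fQd1]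
  convert hasDerivAt_quadRpow (A := 1) (B := 1) (Or.inl ht) using 1
  ring

theorem hasDerivAt_fQd1 (ht : t ≠ 0) : HasDerivAt (fQd1 q α) (fQd2 q α t) t := by
  have h := ((hasDerivAt_id t).const_mul 2).sub
    ((Real.hasDerivAt_rpow_const (p := q - 1) (Or.inl ht)).const_mul (α * q))
  refine h.congr_deriv ?_
  rw [fQd2, show q - 1 - 1 = q - 2 by ring]
  ring

theorem hasDerivAt_fQd2 (ht : t ≠ 0) : HasDerivAt (fQd2 q α) (fQd3 q α t) t := by
  have h := ((Real.hasDerivAt_rpow_const (p := q - 2) (Or.inl ht)).const_mul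
    (α * q * (q - 1))).const_sub 2
  refine h.congr_deriv ?_
  rw [fQd3, show q - 2 - 1 = q - 3 by ring]
  ring

theorem hasDerivAt_psiQ (ht : t ≠ 0) :
    HasDerivAt (psiQ q α) (-2 * fQd3 q α t * fQ q α t) t := by
  have h := ((hasDerivAt_fQd1 (q := q) (α := α) ht).pow 2).sub
    (((hasDerivAt_fQ (q := q) (α := α) ht).const_mul 2).mul (hasDerivAt_fQd2 (q := q) (α := α) ht))
  refine h.congr_deriv ?_
  push_cast
  ring

theorem fQd3_neg (hq : 2 < q) (hα : 0 < α) (ht : 0 < t) : fQd3 q α t < 0 := by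
  have h1 : 0 < q - 1 := by linarith
  have h2 : 0 < q - 2 := by linarith
  have hc : 0 < α * q * (q - 1) * (q - 2) := by positivity
  exact neg_neg_of_pos (mul_pos hc (Real.rpow_pos_of_pos ht _))

theorem hasDerivAt_HQ (ht : 0 < t) :
    HasDerivAt (HQ q α) (-2 * fQd3 q α t * phiQ q α t) t := by
  have h := (((Real.hasDerivAt_rpow_const (p := q - 2) (Or.inl ht.ne')).const_mul
    (4 * α * q * (q - 1) * (q - 2))).mul (hasDerivAt_fQ (q := q) (α := α) ht.ne')).sub
    ((hasDerivAt_psiQ (q := q) (α := α) ht.ne').const_mul (q - 3))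
  refine h.congr_deriv ?_
  have e2 : t ^ (q - 2) = t ^ (q - 3) * t := by
    rw [← Real.rpow_add_one ht.ne']; ring_nf
  have e1 : t ^ (q - 1) = t ^ (q - 3) * t ^ 2 := by
    rw [← Real.rpow_natCast, ← Real.rpow_add ht]; ring_nf
  have e0 : t ^ q = t ^ (q - 3) * t ^ 3 := by
    rw [← Real.rpow_natCast, ← Real.rpow_add ht]; ring_nf
  simp only [phiQ, quadRpow, fQ, fQd1, fQd3, show q - 2 - 1 = q - 3 by ring, e2, e1, e0]
  ring

theorem deriv_gQ (ht : 0 < t) :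
    deriv (fun t => psiQ q α t ^ 2 / t ^ (q - 3)) t =
      psiQ q α t / t ^ (q - 2) * HQ q α t := by
  have hden := Real.hasDerivAt_rpow_const (p := q - 3) (Or.inl ht.ne')
  change deriv (psiQ q α ^ 2 / fun t => t ^ (q - 3)) t = _
  rw [(((hasDerivAt_psiQ ht.ne').pow 2).div hden (Real.rpow_pos_of_pos ht _).ne').deriv]
  have e3 : t ^ (q - 3) = t ^ (q - 4) * t := by
    rw [← Real.rpow_add_one ht.ne']; ring_nf
  have e2 : t ^ (q - 2) = t ^ (q - 4) * t ^ 2 := by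
    rw [← Real.rpow_natCast, ← Real.rpow_add ht]; ring_nf
  have hu : 0 < t ^ (q - 4) := Real.rpow_pos_of_pos ht _
  simp only [Pi.pow_apply, HQ, fQd3, show q - 3 - 1 = q - 4 by ring, e3, e2]
  field_simp
  ring

theorem psiQ_pos_of_isNegPosNeg (hq : 2 < q) (hα : 0 < α) {r₀ r₁ : ℝ}
    (hf : IsNegPosNeg (fQ q α) r₀ r₁) (hd : fQd1 q α r₀ ≠ 0) :
    ∀ t ∈ Icc r₀ r₁, 0 < psiQ q α t := by
  have hψ₀ : 0 < psiQ q α r₀ := by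
    rw [psiQ, hf.apply_left, mul_zero, zero_mul, sub_zero]
    positivity
  have hmono : StrictMonoOn (psiQ q α) (Icc r₀ r₁) :=
    (hf.mul_of_pos fun t ht => by linarith [fQd3_neg hq hα ht]).strictMonoOn_mid
      fun t ht => hasDerivAt_psiQ ht.ne'
  intro t ht
  rcases ht.1.eq_or_lt with rfl | hr₀t
  · exact hψ₀
  · exact hψ₀.trans (hmono (left_mem_Icc.2 hf.lt.le) ht hr₀t)

theorem HQ_neg_of_fQ_eq_zero (hq : 3 < q) (hf : fQ q α t = 0) (hψ : 0 < psiQ q α t) :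
    HQ q α t < 0 := by
  rw [HQ, hf, mul_zero, zero_sub]
  exact neg_neg_of_pos (mul_pos (by linarith) hψ)

theorem HQ_quadRpowCrit (hq : 2 < q) (hα : 0 < α) :
    HQ q α (quadRpowCrit 1 α q) = 4 * (q + 1) * (q - 2) * fQ q α (quadRpowCrit 1 α q) := by
  set m := quadRpowCrit 1 α q
  have hm : 0 < m := quadRpowCrit_pos one_pos hα (by linarith)
  have hmq : m ^ (q - 2) = 2 / (α * q) := by
    rw [quadRpowCrit_rpow zero_le_one hα.le hq, mul_one]
  have e1 : m ^ (q - 1) = m ^ (q - 2) * m := by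
    rw [← Real.rpow_add_one hm.ne']
    ring_nf
  have hq0 : q ≠ 0 := by linarith
  simp only [HQ, psiQ, fQd1, fQd2, e1, hmq]
  field_simp
  ring

theorem exists_phiQ_pos (hq : 2 < q) (hα : 0 < α) {u m : ℝ} (hu : 0 < u) (hum : u < m)
    (h : HQ q α u < HQ q α m) : ∃ c, 0 < c ∧ 0 < phiQ q α c := by
  obtain ⟨c, ⟨huc, -⟩, hc⟩ := exists_hasDerivAt_eq_slope (HQ q α)
    (fun t => -2 * fQd3 q α t * phiQ q α t) hum
    (fun t ht => (hasDerivAt_HQ (hu.trans_le ht.1)).continuousAt.continuousWithinAt)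
    (fun t ht => hasDerivAt_HQ (hu.trans ht.1))
  have hslope : 0 < -2 * fQd3 q α c * phiQ q α c := by
    rw [hc]
    exact div_pos (by linarith) (by linarith)
  exact ⟨c, hu.trans huc,
    pos_of_mul_pos_right hslope (by linarith [fQd3_neg hq hα (hu.trans huc)])⟩

theorem exists_signs_HQ (hq : 3 < q) (hα : 0 < α) {r₀ r₁ : ℝ} (hf : IsNegPosNeg (fQ q α) r₀ r₁)
    (hr₀m : r₀ < quadRpowCrit 1 α q) (hmr₁ : quadRpowCrit 1 α q < r₁)
    (hψ : ∀ t ∈ Icc r₀ r₁, 0 < psiQ q α t) :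
    ∃ a b, r₀ < a ∧ a < b ∧ b < r₁ ∧ (∀ t ∈ Ioo r₀ a, HQ q α t < 0) ∧
      (∀ t ∈ Ioo a b, 0 < HQ q α t) ∧ (∀ t ∈ Ioo b r₁, HQ q α t < 0) := by
  have hq2 : 2 < q := by linarith
  have hHr₀ := HQ_neg_of_fQ_eq_zero hq hf.apply_left (hψ r₀ (left_mem_Icc.2 hf.lt.le))
  have hHr₁ := HQ_neg_of_fQ_eq_zero hq hf.apply_right (hψ r₁ (right_mem_Icc.2 hf.lt.le))
  have hHm : 0 < HQ q α (quadRpowCrit 1 α q) := by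
    rw [HQ_quadRpowCrit hq2 hα]
    exact mul_pos (by nlinarith) (hf.pos_mid _ ⟨hr₀m, hmr₁⟩)
  obtain ⟨c, hc, hφc⟩ := exists_phiQ_pos hq2 hα hf.pos hr₀m (hHr₀.trans hHm)
  obtain ⟨p, r, hφ, -, -⟩ := exists_isNegPosNeg_quadRpow (by linarith) (by linarith)
    (mul_pos hα (by linarith)) hq2 ⟨c, hc, hφc⟩
  exact exists_signs_of_hasDerivAt_isNegPosNeg (fun t ht => hasDerivAt_HQ ht)
    (hφ.mul_of_pos fun t ht => by linarith [fQd3_neg hq2 hα ht])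
    hf.pos hr₀m hmr₁ hHr₀ hHm hHr₁

end Concrete

/-- for q > 3, g' changes sign exactly twice on [x₀, x₁]:
g' < 0 on (x₀, a), g' > 0 on (a, b), g' < 0 on (b, x₁) for some x₀ < a < b < x₁. -/
theorem stmt_10 (q α : ℝ) (hq : 3 < q) (hα : α ∈ Ioo (0 : ℝ) (alphaStar q)) :
    let g : ℝ → ℝ := fun t => psiQ q α t ^ 2 / t ^ (q - 3)
    ∃ a b : ℝ, x0 q α < a ∧ a < b ∧ b < x1 q α ∧
      (∀ t ∈ Ioo (x0 q α) a, deriv g t < 0) ∧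
      (∀ t ∈ Ioo a b, 0 < deriv g t) ∧
      (∀ t ∈ Ioo b (x1 q α), deriv g t < 0) := by
  intro g
  have hq2 : 2 < q := by linarith
  obtain ⟨r₀, r₁, hf, hr₀m, hmr₁⟩ := exists_isNegPosNeg_fQ hq2 hα.1 hα.2
  rw [x0_eq_of_isNegPosNeg hf, x1_eq_of_isNegPosNeg hf]
  have hψ := psiQ_pos_of_isNegPosNeg hq2 hα.1 hf (fQd1_pos hq2 hα.1 hf.pos hr₀m).ne'
  obtain ⟨a, b, hr₀a, hab, hbr₁, hneg₀, hpos, hneg₁⟩ :=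
    exists_signs_HQ hq hα.1 hf hr₀m hmr₁ hψ
  have hg : ∀ t ∈ Ioo r₀ r₁, ∃ k > 0, deriv g t = k * HQ q α t := fun t ht =>
    ⟨_, div_pos (hψ t (Ioo_subset_Icc_self ht)) (Real.rpow_pos_of_pos (hf.pos.trans ht.1) _),
      deriv_gQ (hf.pos.trans ht.1)⟩
  refine ⟨a, b, hr₀a, hab, hbr₁, fun t ht => ?_, fun t ht => ?_, fun t ht => ?_⟩
  · obtain ⟨k, hk, hgt⟩ := hg t ⟨ht.1, ht.2.trans (hab.trans hbr₁)⟩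
    rw [hgt]
    exact mul_neg_of_pos_of_neg hk (hneg₀ t ht)
  · obtain ⟨k, hk, hgt⟩ := hg t ⟨hr₀a.trans ht.1, ht.2.trans hbr₁⟩
    rw [hgt]
    exact mul_pos hk (hpos t ht)
  · obtain ⟨k, hk, hgt⟩ := hg t ⟨(hr₀a.trans hab).trans ht.1, ht.2⟩
    rw [hgt]
    exact mul_neg_of_pos_of_neg hk (hneg₁ t ht)
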